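/- arXiv:1107.1865 — 3 statements merged into one kernel-verified Lean document; each statement's English description precedes it below -/
import Mathlib

section
/- Let c be a real number and define G_c(z) := √π · Γ(z/2)·Γ(z/2+1/2) / (Γ(z/2+c)·Γ(z/2+1−c)). Then for every nonzero real number t such that no Gamma factor involved hits a pole, G_c(it)·G_c(−it) = 2π² · (cosh(πt) − cos(2πc)) / (πt · sinh(πt)). -/
/-- The normalizing factor `G_c(z) = √π Γ(z/2)Γ(z/2+1/2) / (Γ(z/2+c)Γ(z/2+1−c))`. -/
noncomputable def Gfac (c z : ℂ) : ℂ :=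
  ((Real.sqrt Real.pi : ℝ) : ℂ) * Complex.Gamma (z / 2) * Complex.Gamma (z / 2 + 1 / 2) /
    (Complex.Gamma (z / 2 + c) * Complex.Gamma (z / 2 + 1 - c))

/-- For a real parameter `c` and nonzero real `t` such that no Gamma factor involved
hits a pole, `G_c(it)·G_c(−it) = 2π²(cosh(πt) − cos(2πc))/(πt·sinh(πt))`. -/
theorem Gfac_mul_Gfac_neg (c t : ℝ) (ht : t ≠ 0)
    (h1 : Complex.Gamma (Complex.I * (t : ℂ) / 2) ≠ 0)
    (h2 : Complex.Gamma (Complex.I * (t : ℂ) / 2 + 1 / 2) ≠ 0)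
    (h3 : Complex.Gamma (Complex.I * (t : ℂ) / 2 + (c : ℂ)) ≠ 0)
    (h4 : Complex.Gamma (Complex.I * (t : ℂ) / 2 + 1 - (c : ℂ)) ≠ 0)
    (h5 : Complex.Gamma (-(Complex.I * (t : ℂ)) / 2) ≠ 0)
    (h6 : Complex.Gamma (-(Complex.I * (t : ℂ)) / 2 + 1 / 2) ≠ 0)
    (h7 : Complex.Gamma (-(Complex.I * (t : ℂ)) / 2 + (c : ℂ)) ≠ 0)
    (h8 : Complex.Gamma (-(Complex.I * (t : ℂ)) / 2 + 1 - (c : ℂ)) ≠ 0) :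
    Gfac (c : ℂ) (Complex.I * (t : ℂ)) * Gfac (c : ℂ) (-(Complex.I * (t : ℂ))) =
      ((2 * Real.pi ^ 2 * (Real.cosh (Real.pi * t) - Real.cos (2 * Real.pi * c)) /
        (Real.pi * t * Real.sinh (Real.pi * t)) : ℝ) : ℂ) := by
  have hπ : (Real.pi : ℂ) ≠ 0 := Complex.ofReal_ne_zero.2 Real.pi_ne_zero
  have htC : (t : ℂ) ≠ 0 := Complex.ofReal_ne_zero.2 ht
  have hshR : Real.sinh (Real.pi * t) ≠ 0 :=
    Real.sinh_ne_zero.2 (mul_ne_zero Real.pi_ne_zero ht)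
  have hsh : ((Real.sinh (Real.pi * t) : ℝ) : ℂ) ≠ 0 := Complex.ofReal_ne_zero.2 hshR
  simp only [Gfac]
  rw [show -(Complex.I * (t:ℂ)) / 2 = -(Complex.I * (t:ℂ) / 2) by ring] at h5 h6 h7 h8 ⊢
  set w : ℂ := Complex.I * (t : ℂ) / 2 with hw_def
  have hw : w ≠ 0 := by
    rw [hw_def]
    exact div_ne_zero (mul_ne_zero Complex.I_ne_zero htC) two_ne_zero
  have e0 : Complex.Gamma (1 - w) = -w * Complex.Gamma (-w) := by
    rw [show (1:ℂ) - w = -w + 1 by ring, Complex.Gamma_add_one _ (neg_ne_zero.2 hw)]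
  have e1 := Complex.Gamma_mul_Gamma_one_sub w
  have e2 := Complex.Gamma_mul_Gamma_one_sub (w + 1/2)
  rw [show (1:ℂ) - (w + 1/2) = -w + 1/2 by ring] at e2
  have e3 := Complex.Gamma_mul_Gamma_one_sub (w + c)
  rw [show (1:ℂ) - (w + c) = -w + 1 - c by ring] at e3
  have e4 := Complex.Gamma_mul_Gamma_one_sub (-w + c)
  rw [show (1:ℂ) - (-w + c) = w + 1 - c by ring] at e4
  have hs1 : Complex.sin (Real.pi * w) ≠ 0 := by
    intro h
    rw [h, div_zero] at e1
    exact mul_ne_zero h1 (e0 ▸ mul_ne_zero (neg_ne_zero.2 hw) h5) e1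
  have hs2 : Complex.sin (Real.pi * (w + 1/2)) ≠ 0 := by
    intro h
    rw [h, div_zero] at e2
    exact mul_ne_zero h2 h6 e2
  have hs3 : Complex.sin (Real.pi * (w + c)) ≠ 0 := by
    intro h
    rw [h, div_zero] at e3
    exact mul_ne_zero h3 h8 e3
  have hs4 : Complex.sin (Real.pi * (-w + c)) ≠ 0 := by
    intro h
    rw [h, div_zero] at e4
    exact mul_ne_zero h7 h4 e4
  -- cos form
  rw [show (Real.pi : ℂ) * (w + 1/2) = Real.pi * w + Real.pi/2 by ring,
    Complex.sin_add_pi_div_two] at e2 hs2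
  have m1 : Complex.Gamma w * Complex.Gamma (-w)
      = (Real.pi : ℂ) / (Complex.sin (Real.pi * w) * -w) := by
    rw [eq_div_iff (mul_ne_zero hs1 (neg_ne_zero.2 hw))]
    rw [e0, eq_div_iff hs1] at e1
    linear_combination e1
  have hsq : ((Real.sqrt Real.pi : ℝ) : ℂ) * ((Real.sqrt Real.pi : ℝ) : ℂ) = (Real.pi : ℂ) := by
    rw [← Complex.ofReal_mul, Real.mul_self_sqrt Real.pi_pos.le]
  have key : ((Real.sqrt Real.pi : ℝ) : ℂ) * Complex.Gamma w * Complex.Gamma (w + 1/2) /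
      (Complex.Gamma (w + c) * Complex.Gamma (w + 1 - c)) *
      (((Real.sqrt Real.pi : ℝ) : ℂ) * Complex.Gamma (-w) * Complex.Gamma (-w + 1/2) /
      (Complex.Gamma (-w + c) * Complex.Gamma (-w + 1 - c)))
      = (Real.pi : ℂ) * (Complex.Gamma w * Complex.Gamma (-w)) *
        (Complex.Gamma (w + 1/2) * Complex.Gamma (-w + 1/2)) /
        ((Complex.Gamma (w + c) * Complex.Gamma (-w + 1 - c)) *
         (Complex.Gamma (-w + c) * Complex.Gamma (w + 1 - c))) := by
    rw [div_mul_div_comm, ← hsq]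
    ring_nf
  rw [key, m1, e2, e3, e4]
  -- trig identities
  have P1 : Complex.sin (Real.pi * (w + c)) * Complex.sin (Real.pi * (-w + c)) * 2
      = ((Real.cosh (Real.pi * t) : ℝ) : ℂ) - ((Real.cos (2 * Real.pi * c) : ℝ) : ℂ) := by
    have h := Complex.cos_sub_cos (2 * Real.pi * w) (2 * Real.pi * (c:ℂ))
    rw [show ((2:ℂ) * Real.pi * w + 2 * Real.pi * c) / 2 = Real.pi * (w + c) by ring,
      show ((2:ℂ) * Real.pi * w - 2 * Real.pi * c) / 2 = -(Real.pi * (-w + c)) by ring,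
      Complex.sin_neg] at h
    rw [show (2:ℂ) * Real.pi * w = ((Real.pi * t : ℝ) : ℂ) * Complex.I by
        rw [hw_def]; push_cast; ring,
      Complex.cos_mul_I, ← Complex.ofReal_cosh,
      show (2:ℂ) * Real.pi * (c:ℂ) = ((2 * Real.pi * c : ℝ) : ℂ) by push_cast; ring,
      ← Complex.ofReal_cos] at h
    linear_combination -h
  have P2 : Complex.sin (Real.pi * w) * Complex.cos (Real.pi * w) * w
      = -((t:ℂ) * ((Real.sinh (Real.pi * t) : ℝ) : ℂ)) / 4 := by
    have hsm := Complex.sin_two_mul ((Real.pi : ℂ) * w)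
    rw [show (2:ℂ) * (Real.pi * w) = ((Real.pi * t : ℝ) : ℂ) * Complex.I by
        rw [hw_def]; push_cast; ring,
      Complex.sin_mul_I, ← Complex.ofReal_sinh] at hsm
    have hI := Complex.I_mul_I
    rw [hw_def]
    linear_combination (-(Complex.I * (t:ℂ)) / 4) * hsm +
      ((t:ℂ) * ((Real.sinh (Real.pi * t) : ℝ) : ℂ) / 4) * hI
  push_cast at P1 P2 hsh ⊢
  field_simp
  rw [show (Real.pi:ℂ) * c * 2 = 2 * Real.pi * c by ring]
  linear_combination (-((t:ℂ) * Complex.sinh (Real.pi * t)) / 2) * P1 -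
    (2 * (Complex.cosh (Real.pi * t) - Complex.cos (2 * Real.pi * c))) * P2
end

section
/- For a rational function P ∈ ℂ(z) define P*(z) := conj(P(1/conj(z))), which is again an element of ℂ(z). Let μ ∈ ℂ(z) be a nonzero rational function such that μ* = μ and μ(z) ≥ 0 (real and nonnegative, at points where μ is defined) for every z with |z| = 1. Then there exists a rational function V ∈ ℂ(z) such that: (1) V has neither zeros nor poles in the region 0 < |z| < 1, and (2) μ = V · V*. -/
open Polynomial Complex Filter Topology

local notation "conj'" => starRingEnd ℂ




/-- The unit circle minus a finite set is infinite. -/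
lemma circle_diff_infinite {S : Set ℂ} (hS : S.Finite) :
    Set.Infinite {z : ℂ | ‖z‖ = 1 ∧ z ∉ S} := by
  have hmap : ∀ t : ℝ, t ∈ Set.Ioo (-1 : ℝ) 1 →
      ‖(t : ℂ) + Real.sqrt (1 - t^2) * Complex.I‖ = 1 := by
    intro t ht
    have h1 : (0:ℝ) ≤ 1 - t^2 := by nlinarith [ht.1, ht.2]
    have : Complex.normSq ((t : ℂ) + Real.sqrt (1 - t^2) * Complex.I) = 1 := by
      simp [Complex.normSq_add_mul_I, Real.sq_sqrt h1]
    rw [← Complex.sq_norm] at this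
    nlinarith [norm_nonneg ((t : ℂ) + Real.sqrt (1 - t^2) * Complex.I)]
  set f : ℝ → ℂ := fun t => (t : ℂ) + Real.sqrt (1 - t^2) * Complex.I with hf
  have hinj : Set.InjOn f (Set.Ioo (-1 : ℝ) 1) := by
    intro a _ b _ hab
    have := congrArg Complex.re hab
    simpa [hf] using this
  have hIoo : (Set.Ioo (-1 : ℝ) 1).Infinite := Set.Ioo_infinite (by norm_num)
  have himg : (f '' Set.Ioo (-1 : ℝ) 1).Infinite := hIoo.image hinj
  have : ((f '' Set.Ioo (-1 : ℝ) 1) \ S).Infinite := himg.diff hS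
  refine this.mono ?_
  rintro z ⟨⟨t, ht, rfl⟩, hz⟩
  exact ⟨hmap t ht, hz⟩

/-- Two polynomials agreeing on the circle minus a finite set are equal. -/
lemma poly_eq_of_circle {p q : ℂ[X]} {S : Set ℂ} (hS : S.Finite)
    (h : ∀ z : ℂ, ‖z‖ = 1 → z ∉ S → p.eval z = q.eval z) : p = q := by
  by_contra hne
  have hpq : p - q ≠ 0 := sub_ne_zero.mpr hne
  have : Set.Infinite {z : ℂ | (p - q).IsRoot z} := by
    refine (circle_diff_infinite hS).mono ?_
    rintro z ⟨hz1, hz2⟩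
    simp [Polynomial.IsRoot, sub_eq_zero, h z hz1 hz2]
  exact hpq (Polynomial.eq_zero_of_infinite_isRoot _ this)

/-- Evaluation of the reverse. -/
lemma eval_reverse_of_ne_zero {p : ℂ[X]} {z : ℂ} (hz : z ≠ 0) :
    p.reverse.eval z = z ^ p.natDegree * p.eval z⁻¹ := by
  letI : Invertible (z⁻¹) := invertibleOfNonzero (inv_ne_zero hz)
  have h := Polynomial.eval₂_reverse_mul_pow (RingHom.id ℂ) z⁻¹ p
  have hinv : (⅟ (z⁻¹) : ℂ) = z := invOf_eq_right_inv (by field_simp)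
  rw [hinv] at h
  have h2 : p.reverse.eval z * (z⁻¹) ^ p.natDegree = p.eval z⁻¹ := h
  field_simp at h2
  rw [one_div] at h2
  rw [← h2, inv_pow, mul_left_comm, mul_inv_cancel₀ (pow_ne_zero _ hz), mul_one]

example (p : ℂ[X]) (z : ℂ) : p.eval z = p.eval₂ (RingHom.id ℂ) z := rfl

lemma conj_eval (p : ℂ[X]) (z : ℂ) :
    conj' (p.eval z) = (p.map conj').eval (conj' z) := by
  rw [Polynomial.eval_map]
  have : p.eval z = p.eval₂ (RingHom.id ℂ) z := rfl
  rw [this, Polynomial.hom_eval₂]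
  rfl

lemma inv_eq_conj_of_circle {z : ℂ} (hz : ‖z‖ = 1) : z⁻¹ = conj' z := by
  have hn : Complex.normSq z = 1 := by
    rw [← Complex.sq_norm, hz]; norm_num
  rw [Complex.inv_def, hn]
  simp

/-- Evaluation of the conjugate-reverse on the circle. -/
lemma eval_conj_reverse {p : ℂ[X]} {z : ℂ} (hz : ‖z‖ = 1) :
    ((p.map conj').reverse).eval z = z ^ p.natDegree * conj' (p.eval z) := by
  have hz0 : z ≠ 0 := by
    intro h; rw [h] at hz; simp at hz
  rw [eval_reverse_of_ne_zero hz0, Polynomial.natDegree_map, inv_eq_conj_of_circle hz,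
    ← conj_eval]



lemma even_rootMultiplicity_on_circle (P : ℂ[X]) (hP : P ≠ 0) (N : ℤ) {S : Set ℂ}
    (hS : S.Finite)
    (hreal : ∀ z : ℂ, ‖z‖ = 1 → z ∉ S → ∃ r : ℝ, 0 ≤ r ∧ P.eval z = (r : ℂ) * z ^ N)
    {a : ℂ} (ha : ‖a‖ = 1) :
    Even (P.rootMultiplicity a) := by
  by_contra hodd
  rw [← Nat.not_odd_iff_even, not_not] at hodd
  set k := P.rootMultiplicity a with hk
  set g := P /ₘ (X - C a) ^ k with hg
  have hfact : (X - C a) ^ k * g = P := P.pow_mul_divByMonic_rootMultiplicity_eq a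
  have hga : g.eval a ≠ 0 := Polynomial.eval_divByMonic_pow_rootMultiplicity_ne_zero a hP
  have ha0 : a ≠ 0 := by intro h; rw [h] at ha; simp at ha
  set zc : ℝ → ℂ := fun t => a * Complex.exp ((t : ℂ) * Complex.I) with hzc
  have habs : ∀ t : ℝ, ‖zc t‖ = 1 := by
    intro t; simp [hzc, ha, Complex.norm_exp_ofReal_mul_I]
  have hzc0 : ∀ t : ℝ, zc t ≠ 0 := by
    intro t h; have := habs t; rw [h] at this; simp at this
  have hzc_cont : Continuous zc :=
    continuous_const.mul (Complex.continuous_exp.comp (Complex.continuous_ofReal.mul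
      continuous_const))
  have hzczero : zc 0 = a := by simp [hzc]
  set φ : ℝ → ℂ := fun t => P.eval (zc t) * (zc t) ^ (-N) / (t : ℂ) ^ k with hφ
  set L : ℂ := (a * Complex.I) ^ k * g.eval a * a ^ (-N) with hL
  have hL0 : L ≠ 0 := by
    apply mul_ne_zero (mul_ne_zero _ hga) (zpow_ne_zero _ ha0)
    exact pow_ne_zero _ (mul_ne_zero ha0 Complex.I_ne_zero)
  -- The limit
  have h_deriv : HasDerivAt zc (a * Complex.I) 0 := by
    have h1 : HasDerivAt (fun t : ℝ => (t : ℂ)) 1 0 := by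
      simpa using (hasDerivAt_id (0:ℝ)).ofReal_comp
    have h2 : HasDerivAt (fun t : ℝ => (t : ℂ) * Complex.I) Complex.I 0 := by
      simpa using h1.mul_const Complex.I
    have h3 := h2.cexp
    simp only [Complex.ofReal_zero, zero_mul, Complex.exp_zero, one_mul] at h3
    simpa [hzc] using h3.const_mul a
  have h_slope : Tendsto (fun t : ℝ => (zc t - a) / (t : ℂ)) (𝓝[≠] (0:ℝ)) (𝓝 (a * Complex.I)) := by
    have := hasDerivAt_iff_tendsto_slope.mp h_deriv
    refine this.congr' ?_
    filter_upwards [eventually_mem_nhdsWithin] with t ht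
    simp only [Set.mem_compl_iff, Set.mem_singleton_iff] at ht
    rw [slope_def_module, hzczero]
    simp [Complex.real_smul, div_eq_inv_mul, sub_zero]
  have h_g : Tendsto (fun t : ℝ => g.eval (zc t)) (𝓝[≠] (0:ℝ)) (𝓝 (g.eval a)) := by
    have : ContinuousAt (fun t : ℝ => g.eval (zc t)) 0 :=
      (g.continuous_aeval.continuousAt).comp hzc_cont.continuousAt
    simpa [hzczero] using this.continuousWithinAt.tendsto
  have h_zpow : Tendsto (fun t : ℝ => (zc t) ^ (-N)) (𝓝[≠] (0:ℝ)) (𝓝 (a ^ (-N))) := by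
    have hc : ContinuousAt (fun w : ℂ => w ^ (-N)) (zc 0) := by
      rw [hzczero]; exact continuousAt_zpow₀ a (-N) (Or.inl ha0)
    have : ContinuousAt (fun t : ℝ => (zc t) ^ (-N)) 0 := hc.comp hzc_cont.continuousAt
    simpa [hzczero] using this.continuousWithinAt.tendsto
  have h_tend : Tendsto φ (𝓝[≠] (0:ℝ)) (𝓝 L) := by
    have hprod : Tendsto (fun t : ℝ => ((zc t - a) / (t : ℂ)) ^ k * g.eval (zc t) * (zc t) ^ (-N))
        (𝓝[≠] (0:ℝ)) (𝓝 L) := ((h_slope.pow k).mul h_g).mul h_zpow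
    refine hprod.congr' ?_
    filter_upwards [eventually_mem_nhdsWithin] with t ht
    simp only [Set.mem_compl_iff, Set.mem_singleton_iff] at ht
    have ht0 : (t : ℂ) ≠ 0 := by exact_mod_cast ht
    have : P.eval (zc t) = (zc t - a) ^ k * g.eval (zc t) := by
      conv_lhs => rw [← hfact]
      simp [Polynomial.eval_pow]
    rw [hφ]; simp only [this]
    rw [div_pow, div_mul_eq_mul_div, div_mul_eq_mul_div]
  -- eventual form of φ
  have h_form : ∀ᶠ t in 𝓝[≠] (0:ℝ), ∃ r : ℝ, 0 ≤ r ∧ φ t = (r : ℂ) / (t : ℂ) ^ k := by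
    have ev1 : ∀ᶠ t in 𝓝 (0:ℝ), zc t ∉ S \ {a} := by
      have hC : IsClosed (S \ {a}) := (hS.subset (Set.diff_subset)).isClosed
      have haC : a ∈ (S \ {a})ᶜ := by simp
      have := hC.isOpen_compl.eventually_mem haC
      exact (hzc_cont.continuousAt (x := (0:ℝ))).eventually (by rw [hzczero]; exact this)
    have ev2 : ∀ᶠ t in 𝓝[≠] (0:ℝ), zc t ≠ a := by
      have hball : ∀ᶠ t in 𝓝 (0:ℝ), |t| < 1 := by
        have : Tendsto (fun t : ℝ => |t|) (𝓝 0) (𝓝 |0|) := (continuous_abs.tendsto 0)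
        simp only [abs_zero] at this
        exact this.eventually_lt_const (by norm_num)
      rw [eventually_nhdsWithin_iff]
      filter_upwards [hball] with t hball ht
      simp only [Set.mem_compl_iff, Set.mem_singleton_iff] at ht
      intro heq
      have hexp1 : Complex.exp ((t:ℂ) * Complex.I) = 1 := by
        apply mul_left_cancel₀ ha0
        rw [mul_one]
        exact heq
      rw [Complex.exp_eq_one_iff] at hexp1
      obtain ⟨n, hn⟩ := hexp1
      have hI : (t : ℂ) = n * (2 * Real.pi) := by
        have hI2 : (t : ℂ) * Complex.I = (n * (2 * Real.pi)) * Complex.I := by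
          rw [hn]; ring
        exact mul_right_cancel₀ Complex.I_ne_zero hI2
      have ht' : t = n * (2 * Real.pi) := by exact_mod_cast hI
      rcases eq_or_ne n 0 with h0 | h0
      · rw [h0] at ht'; simp at ht'; exact ht ht'
      · have : (1:ℝ) ≤ |(n:ℝ)| := by
          have h1 : (1:ℤ) ≤ |n| := Int.one_le_abs (by exact_mod_cast h0)
          calc (1:ℝ) = ((1:ℤ):ℝ) := by norm_num
          _ ≤ ((|n|:ℤ):ℝ) := by exact_mod_cast h1
          _ = |(n:ℝ)| := by push_cast; ring
        have hpi : (3:ℝ) < Real.pi := Real.pi_gt_three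
        rw [ht'] at hball
        rw [abs_mul] at hball
        have : |(2:ℝ) * Real.pi| ≥ 6 := by rw [abs_of_pos (by linarith)]; linarith
        nlinarith [abs_nonneg ((n:ℝ))]
    rw [eventually_nhdsWithin_iff] at ev2 ⊢
    filter_upwards [ev1, ev2] with t h1 h2 ht
    have hnotS : zc t ∉ S := by
      intro hmem
      exact (h2 ht) (by_contra fun hne => (h1 ⟨hmem, hne⟩))
    obtain ⟨r, hr, heq⟩ := hreal (zc t) (habs t) hnotS
    refine ⟨r, hr, ?_⟩
    rw [hφ]; simp only [heq]
    have : (zc t) ^ N * (zc t) ^ (-N) = 1 := by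
      rw [← zpow_add₀ (hzc0 t)]; simp
    rw [mul_assoc, this, mul_one]
  -- limits from the right and left
  have hmono_r : 𝓝[>] (0:ℝ) ≤ 𝓝[≠] (0:ℝ) :=
    nhdsWithin_mono 0 (fun x hx => ne_of_gt hx)
  have hmono_l : 𝓝[<] (0:ℝ) ≤ 𝓝[≠] (0:ℝ) :=
    nhdsWithin_mono 0 (fun x hx => ne_of_lt hx)
  have hclosed_r : IsClosed {w : ℂ | w.im = 0 ∧ 0 ≤ w.re} :=
    (isClosed_eq Complex.continuous_im continuous_const).inter
      (isClosed_le continuous_const Complex.continuous_re)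
  have hclosed_l : IsClosed {w : ℂ | w.im = 0 ∧ w.re ≤ 0} :=
    (isClosed_eq Complex.continuous_im continuous_const).inter
      (isClosed_le Complex.continuous_re continuous_const)
  have hmem_r : L ∈ {w : ℂ | w.im = 0 ∧ 0 ≤ w.re} := by
    refine hclosed_r.mem_of_tendsto (h_tend.mono_left hmono_r) ?_
    have h_form' := hmono_r h_form
    filter_upwards [h_form', eventually_mem_nhdsWithin] with t ⟨r, hr, heq⟩ ht
    have ht' : (0:ℝ) < t := ht
    have hcast : φ t = ((r / t ^ k : ℝ) : ℂ) := by rw [heq]; push_cast; ring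
    simp only [Set.mem_setOf_eq, hcast, Complex.ofReal_im, Complex.ofReal_re]
    refine ⟨trivial, by positivity⟩
  have hmem_l : L ∈ {w : ℂ | w.im = 0 ∧ w.re ≤ 0} := by
    refine hclosed_l.mem_of_tendsto (h_tend.mono_left hmono_l) ?_
    have h_form' := hmono_l h_form
    filter_upwards [h_form', eventually_mem_nhdsWithin] with t ⟨r, hr, heq⟩ ht
    have ht' : t < 0 := ht
    have htk : t ^ k < 0 := hodd.pow_neg ht'
    have hcast : φ t = ((r / t ^ k : ℝ) : ℂ) := by rw [heq]; push_cast; ring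
    simp only [Set.mem_setOf_eq, hcast, Complex.ofReal_im, Complex.ofReal_re]
    exact ⟨trivial, div_nonpos_iff.mpr (Or.inl ⟨hr, le_of_lt htk⟩)⟩
  apply hL0
  apply Complex.ext
  · simp only [Complex.zero_re]; linarith [hmem_r.2, hmem_l.2]
  · simp only [Complex.zero_im]; exact hmem_r.1

lemma abs_one_ne_zero {z : ℂ} (hz : ‖z‖ = 1) : z ≠ 0 := by
  intro h; rw [h] at hz; simp at hz

/-- Main induction: Fejér–Riesz type factorization. -/
lemma core (n : ℕ) : ∀ (P : ℂ[X]), P ≠ 0 → P.natDegree ≤ n → ∀ (N : ℤ) (S : Set ℂ), S.Finite →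
    (∀ z : ℂ, ‖z‖ = 1 → z ∉ S → ∃ r : ℝ, 0 ≤ r ∧ P.eval z = (r : ℂ) * z ^ N) →
    ∃ (Q : ℂ[X]) (S' : Set ℂ), S'.Finite ∧ Q ≠ 0 ∧
      (∀ z : ℂ, 0 < ‖z‖ → ‖z‖ < 1 → Q.eval z ≠ 0) ∧
      (∀ z : ℂ, ‖z‖ = 1 → z ∉ S' →
        P.eval z = (Complex.normSq (Q.eval z) : ℂ) * z ^ N) := by
  induction n using Nat.strong_induction_on with
  | _ n IH =>
  intro P hP hdeg N S hS hreal
  obtain ⟨u, v, huv⟩ : ∃ u v : ℕ, N = (u : ℤ) - v := ⟨N.toNat, (-N).toNat, by omega⟩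
  set R := (P.map conj').reverse with hR
  -- the reflection identity
  have hid : P * X ^ (P.natDegree + 2 * v) = R * X ^ (2 * u) := by
    apply poly_eq_of_circle hS
    intro z hz hzS
    have hz0 : z ≠ 0 := abs_one_ne_zero hz
    obtain ⟨r, hr, heq⟩ := hreal z hz hzS
    have hRz : R.eval z = z ^ P.natDegree * conj' (P.eval z) := eval_conj_reverse hz
    simp only [Polynomial.eval_mul, Polynomial.eval_pow, Polynomial.eval_X, hRz, heq]
    rw [map_mul, Complex.conj_ofReal, map_zpow₀, ← inv_eq_conj_of_circle hz, inv_zpow]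
    simp only [huv, zpow_sub₀ hz0, zpow_natCast]
    field_simp
    ring
  have pair_root : ∀ b : ℂ, b ≠ 0 → P.eval b = 0 → P.eval ((conj' b)⁻¹) = 0 := by
    intro b hb0 hbroot
    have hcb0 : conj' b ≠ 0 := star_ne_zero.mpr hb0
    set b' := (conj' b)⁻¹ with hb'
    have hb'0 : b' ≠ 0 := inv_ne_zero hcb0
    have hidb := congrArg (Polynomial.eval b') hid
    simp only [Polynomial.eval_mul, Polynomial.eval_pow, Polynomial.eval_X] at hidb
    have hRb : R.eval b' = 0 := by
      rw [hR, eval_reverse_of_ne_zero hb'0]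
      have : b'⁻¹ = conj' b := by rw [hb', inv_inv]
      rw [this, ← conj_eval, hbroot, map_zero, mul_zero]
    rw [hRb, zero_mul] at hidb
    exact (mul_eq_zero.mp hidb).resolve_right (pow_ne_zero _ hb'0)
  by_cases hzero : P.eval 0 = 0
  · -- strip a root at the origin
    obtain ⟨P₁, hP₁⟩ : X ∣ P := Polynomial.X_dvd_iff.mpr
      (by rwa [Polynomial.coeff_zero_eq_eval_zero])
    have hP₁0 : P₁ ≠ 0 := by rintro rfl; rw [mul_zero] at hP₁; exact hP hP₁
    have hdeg1 : P.natDegree = P₁.natDegree + 1 := by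
      rw [hP₁, Polynomial.natDegree_mul Polynomial.X_ne_zero hP₁0, Polynomial.natDegree_X]
      omega
    have hlt : P₁.natDegree < n := by rw [hdeg1] at hdeg; omega
    have hhyp : ∀ z : ℂ, ‖z‖ = 1 → z ∉ S →
        ∃ r : ℝ, 0 ≤ r ∧ P₁.eval z = (r : ℂ) * z ^ (N - 1) := by
      intro z hz hzS
      have hz0 : z ≠ 0 := abs_one_ne_zero hz
      obtain ⟨r, hr, heq⟩ := hreal z hz hzS
      rw [hP₁, Polynomial.eval_mul, Polynomial.eval_X] at heq
      refine ⟨r, hr, mul_left_cancel₀ hz0 ?_⟩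
      rw [heq, zpow_sub_one₀ hz0]
      field_simp
      try ring
    obtain ⟨Q, S', hS'fin, hQ0, hQfree, hQeq⟩ :=
      IH P₁.natDegree hlt P₁ hP₁0 le_rfl (N - 1) S hS hhyp
    refine ⟨Q, S', hS'fin, hQ0, hQfree, ?_⟩
    intro z hz hzS'
    have hz0 : z ≠ 0 := abs_one_ne_zero hz
    rw [hP₁, Polynomial.eval_mul, Polynomial.eval_X, hQeq z hz hzS', zpow_sub_one₀ hz0]
    field_simp
    try ring
  · by_cases hroot : ∃ a : ℂ, a ≠ 0 ∧ ‖a‖ ≤ 1 ∧ P.eval a = 0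
    · -- strip a pair of roots (a, 1/conj a)
      obtain ⟨a, ha0, ha1, haroot⟩ := hroot
      have hca0 : conj' a ≠ 0 := star_ne_zero.mpr ha0
      set a' := (conj' a)⁻¹ with ha'def
      have ha'0 : a' ≠ 0 := inv_ne_zero hca0
      have ha'root : P.eval a' = 0 := pair_root a ha0 haroot
      have hfact : ∃ P₁ : ℂ[X], P = (X - C a) * (X - C a') * P₁ := by
        by_cases hca : a' = a
        · have habs1 : ‖a‖ = 1 := by
            have h1 : ‖a'‖ = (‖a‖)⁻¹ := by
              rw [ha'def, norm_inv, Complex.norm_conj]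
            rw [hca] at h1
            have hpos : 0 < ‖a‖ := norm_pos_iff.mpr ha0
            have h3 : ‖a‖ * ‖a‖ = 1 := by
              nth_rewrite 1 [h1]; exact inv_mul_cancel₀ hpos.ne'
            refine le_antisymm ha1 ?_
            nlinarith [h3, hpos]
          have heven := even_rootMultiplicity_on_circle P hP N hS hreal habs1
          have hpos : 0 < P.rootMultiplicity a :=
            (Polynomial.rootMultiplicity_pos hP).mpr haroot
          have h2le : 2 ≤ P.rootMultiplicity a := by
            rcases heven with ⟨m, hm⟩; omega
          have hdvd : (X - C a) ^ 2 ∣ P :=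
            dvd_trans (pow_dvd_pow _ h2le) (P.pow_rootMultiplicity_dvd a)
          obtain ⟨P₁, hP₁⟩ := hdvd
          exact ⟨P₁, by rw [hca, hP₁]; ring⟩
        · obtain ⟨P₀, hP₀⟩ := (Polynomial.dvd_iff_isRoot.mpr haroot : (X - C a) ∣ P)
          have hP₀root : P₀.eval a' = 0 := by
            have := ha'root
            rw [hP₀, Polynomial.eval_mul, Polynomial.eval_sub, Polynomial.eval_X,
              Polynomial.eval_C] at this
            exact (mul_eq_zero.mp this).resolve_left (sub_ne_zero.mpr hca)
          obtain ⟨P₁, hP₁⟩ := (Polynomial.dvd_iff_isRoot.mpr hP₀root : (X - C a') ∣ P₀)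
          exact ⟨P₁, by rw [hP₀, hP₁]; ring⟩
      obtain ⟨P₁, hP₁⟩ := hfact
      have hP₁0 : P₁ ≠ 0 := by
        rintro rfl; rw [mul_zero] at hP₁; exact hP hP₁
      set P₂ : ℂ[X] := C (-(conj' a)⁻¹) * P₁ with hP₂def
      have hP₂0 : P₂ ≠ 0 :=
        mul_ne_zero (by simp [Polynomial.C_eq_zero, hca0]) hP₁0
      have hP₂deg : P₂.natDegree = P₁.natDegree := by
        rw [hP₂def, Polynomial.natDegree_mul (by simp [Polynomial.C_eq_zero, hca0]) hP₁0,
          Polynomial.natDegree_C, zero_add]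
      have hdeg2 : P.natDegree = P₁.natDegree + 2 := by
        rw [hP₁, Polynomial.natDegree_mul (mul_ne_zero (Polynomial.X_sub_C_ne_zero a)
          (Polynomial.X_sub_C_ne_zero a')) hP₁0,
          Polynomial.natDegree_mul (Polynomial.X_sub_C_ne_zero a)
          (Polynomial.X_sub_C_ne_zero a')]
        simp only [Polynomial.natDegree_X_sub_C]
        omega
      -- the key pointwise factorization on the circle
      have hkey : ∀ z : ℂ, ‖z‖ = 1 →
          P.eval z = z * (Complex.normSq (z - a) : ℂ) * P₂.eval z := by
        intro z hz
        have hz0 : z ≠ 0 := abs_one_ne_zero hz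
        have hnsq : ((Complex.normSq (z - a) : ℝ) : ℂ) = (z - a) * conj' (z - a) :=
          (Complex.mul_conj _).symm
        rw [hP₁, Polynomial.eval_mul, Polynomial.eval_mul, Polynomial.eval_sub,
          Polynomial.eval_sub, Polynomial.eval_X, Polynomial.eval_C, Polynomial.eval_C,
          hP₂def, Polynomial.eval_mul, Polynomial.eval_C, hnsq, map_sub,
          ← inv_eq_conj_of_circle hz]
        rw [ha'def]
        field_simp
        ring
      have hlt2 : P₂.natDegree < n := by
        rw [hP₂deg]; omega
      have hhyp2 : ∀ z : ℂ, ‖z‖ = 1 → z ∉ (S ∪ {a}) →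
          ∃ r : ℝ, 0 ≤ r ∧ P₂.eval z = (r : ℂ) * z ^ (N - 1) := by
        intro z hz hzS
        simp only [Set.mem_union, Set.mem_singleton_iff, not_or] at hzS
        have hz0 : z ≠ 0 := abs_one_ne_zero hz
        have hza : z - a ≠ 0 := sub_ne_zero.mpr hzS.2
        have hnsqpos : 0 < Complex.normSq (z - a) := Complex.normSq_pos.mpr hza
        obtain ⟨r, hr, heq⟩ := hreal z hz hzS.1
        refine ⟨r / Complex.normSq (z - a), div_nonneg hr hnsqpos.le, ?_⟩
        have hk := hkey z hz
        rw [heq] at hk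
        have hnsqC : ((Complex.normSq (z - a) : ℝ) : ℂ) ≠ 0 := by
          exact_mod_cast hnsqpos.ne'
        refine mul_left_cancel₀ (mul_ne_zero hz0 hnsqC) ?_
        calc z * ((Complex.normSq (z - a) : ℝ) : ℂ) * P₂.eval z
            = (r : ℂ) * z ^ N := hk.symm
          _ = z * ((Complex.normSq (z - a) : ℝ) : ℂ) *
              (((r / Complex.normSq (z - a) : ℝ) : ℂ) * z ^ (N - 1)) := by
              rw [zpow_sub_one₀ hz0]
              push_cast
              field_simp
      obtain ⟨Q₂, S₂', hS₂fin, hQ₂0, hQ₂free, hQ₂eq⟩ :=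
        IH P₂.natDegree hlt2 P₂ hP₂0 le_rfl (N - 1) (S ∪ {a}) (hS.union (Set.finite_singleton a))
          hhyp2
      -- the factor replacing (X - a)
      set F : ℂ[X] := if ‖a‖ < 1 then (C (conj' a) * X - C 1) else (X - C a) with hFdef
      have hF0 : F ≠ 0 := by
        rw [hFdef]
        split_ifs with hlt1
        · intro h
          have := congrArg (Polynomial.eval 0) h
          simp at this
        · exact Polynomial.X_sub_C_ne_zero a
      have hFfree : ∀ z : ℂ, 0 < ‖z‖ → ‖z‖ < 1 → F.eval z ≠ 0 := by
        intro z hz0 hz1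
        rw [hFdef]
        split_ifs with hlt1
        · simp only [Polynomial.eval_sub, Polynomial.eval_mul, Polynomial.eval_C,
            Polynomial.eval_X, Polynomial.eval_one]
          intro h
          have h1 : conj' a * z = 1 := by
            have := sub_eq_zero.mp h
            simpa using this
          have := congrArg (‖·‖) h1
          rw [norm_mul, Complex.norm_conj, norm_one] at this
          nlinarith [norm_nonneg a, norm_nonneg z]
        · simp only [Polynomial.eval_sub, Polynomial.eval_X, Polynomial.eval_C]
          intro h
          have : z = a := sub_eq_zero.mp h
          rw [this] at hz1
          exact absurd hz1 (not_lt.mpr (not_lt.mp hlt1))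
      have hFnsq : ∀ z : ℂ, ‖z‖ = 1 →
          Complex.normSq (F.eval z) = Complex.normSq (z - a) := by
        intro z hz
        have hz0 : z ≠ 0 := abs_one_ne_zero hz
        rw [hFdef]
        split_ifs with hlt1
        · simp only [Polynomial.eval_sub, Polynomial.eval_mul, Polynomial.eval_C,
            Polynomial.eval_X, Polynomial.eval_one]
          have habs : ‖conj' a * z - 1‖ = ‖z - a‖ := by
            have h1 : conj' (conj' a * z - 1) = a * z⁻¹ - 1 := by
              rw [map_sub, map_mul, Complex.conj_conj, map_one, ← inv_eq_conj_of_circle hz]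
            have h2 : ‖conj' a * z - 1‖ = ‖a * z⁻¹ - 1‖ := by
              rw [← h1, Complex.norm_conj]
            rw [h2]
            have h3 : a * z⁻¹ - 1 = z⁻¹ * (a - z) := by field_simp
            rw [h3, norm_mul, norm_inv, hz]
            rw [norm_sub_rev]
            norm_num
          calc Complex.normSq (conj' a * z - 1) = ‖conj' a * z - 1‖ ^ 2 := by
                rw [Complex.sq_norm]
            _ = ‖z - a‖ ^ 2 := by rw [habs]
            _ = Complex.normSq (z - a) := Complex.sq_norm _
        · simp
      refine ⟨F * Q₂, S₂', hS₂fin, mul_ne_zero hF0 hQ₂0, ?_, ?_⟩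
      · intro z hz0 hz1
        rw [Polynomial.eval_mul]
        exact mul_ne_zero (hFfree z hz0 hz1) (hQ₂free z hz0 hz1)
      · intro z hz hzS'
        have hz0 : z ≠ 0 := abs_one_ne_zero hz
        rw [hkey z hz, hQ₂eq z hz hzS', Polynomial.eval_mul, Complex.normSq_mul, hFnsq z hz,
          zpow_sub_one₀ hz0]
        push_cast
        field_simp
    · -- base case: P is a nonzero constant
      have hnoroot : ∀ b : ℂ, P.eval b ≠ 0 := by
        intro b hb
        have hb0 : b ≠ 0 := by rintro rfl; exact hzero hb
        rcases le_or_gt (‖b‖) 1 with hle | hgt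
        · exact hroot ⟨b, hb0, hle, hb⟩
        · have hcb0 : conj' b ≠ 0 := star_ne_zero.mpr hb0
          have hb' : P.eval ((conj' b)⁻¹) = 0 := pair_root b hb0 hb
          have habs' : ‖(conj' b)⁻¹‖ = (‖b‖)⁻¹ := by
            rw [norm_inv, Complex.norm_conj]
          refine hroot ⟨(conj' b)⁻¹, inv_ne_zero hcb0, ?_, hb'⟩
          rw [habs']
          have : (0:ℝ) < ‖b‖ := norm_pos_iff.mpr hb0
          rw [inv_le_one_iff₀]
          right; linarith
      have hdeg0 : P.natDegree = 0 := by
        by_contra hne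
        have : 0 < P.degree := Polynomial.natDegree_pos_iff_degree_pos.mp
          (Nat.pos_of_ne_zero hne)
        obtain ⟨b, hb⟩ := Complex.exists_root this
        exact hnoroot b hb
      obtain ⟨c, rfl⟩ := Polynomial.natDegree_eq_zero.mp hdeg0
      have hc0 : c ≠ 0 := fun h => hP (by rw [h, map_zero])
      -- N must be 0
      have hN : N = 0 := by
        by_contra hN0
        set m := N.natAbs with hm
        have hm0 : m ≠ 0 := Int.natAbs_ne_zero.mpr hN0
        have habsc : (0:ℝ) < ‖c‖ := norm_pos_iff.mpr hc0
        set e : ℂ := c / (‖c‖ : ℂ) with he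
        have key : ∀ z : ℂ, ‖z‖ = 1 → z ∉ S → z ^ N = e := by
          intro z hz hzS
          have hz0 : z ≠ 0 := abs_one_ne_zero hz
          obtain ⟨r, hr, heq⟩ := hreal z hz hzS
          simp only [Polynomial.eval_C] at heq
          have habsz : ‖z ^ N‖ = 1 := by
            rw [norm_zpow, hz, one_zpow]
          have hrabs : r = ‖c‖ := by
            have := congrArg (‖·‖) heq
            rw [norm_mul, habsz, mul_one, Complex.norm_of_nonneg hr] at this
            exact this.symm
          rw [he, ← hrabs, heq]
          have hrne : (r:ℂ) ≠ 0 := by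
            rw [hrabs]; exact_mod_cast habsc.ne'
          field_simp
        -- turn this into a polynomial with infinitely many roots
        have hinf := circle_diff_infinite hS
        rcases lt_or_gt_of_ne hN0 with hNneg | hNpos
        · -- z ^ m = e⁻¹ for infinitely many z
          have he0 : e ≠ 0 := by
            rw [he]
            apply div_ne_zero hc0
            exact_mod_cast habsc.ne'
          have hG : (X ^ m - C e⁻¹ : ℂ[X]) ≠ 0 := by
            intro h
            have := congrArg Polynomial.natDegree h
            rw [Polynomial.natDegree_X_pow_sub_C, Polynomial.natDegree_zero] at this
            exact hm0 this
          apply hG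
          apply Polynomial.eq_zero_of_infinite_isRoot
          refine hinf.mono ?_
          rintro z ⟨hz, hzS⟩
          have hz0 : z ≠ 0 := abs_one_ne_zero hz
          have hk := key z hz hzS
          have hNm : N = -(m : ℤ) := by omega
          rw [hNm, zpow_neg, zpow_natCast] at hk
          simp only [Set.mem_setOf_eq, Polynomial.IsRoot.def, Polynomial.eval_sub,
            Polynomial.eval_pow, Polynomial.eval_X, Polynomial.eval_C]
          rw [sub_eq_zero, ← hk, inv_inv]
        · have hG : (X ^ m - C e : ℂ[X]) ≠ 0 := by
            intro h
            have := congrArg Polynomial.natDegree h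
            rw [Polynomial.natDegree_X_pow_sub_C, Polynomial.natDegree_zero] at this
            exact hm0 this
          apply hG
          apply Polynomial.eq_zero_of_infinite_isRoot
          refine hinf.mono ?_
          rintro z ⟨hz, hzS⟩
          have hk := key z hz hzS
          have hNm : N = (m : ℤ) := by omega
          rw [hNm, zpow_natCast] at hk
          simp only [Set.mem_setOf_eq, Polynomial.IsRoot.def, Polynomial.eval_sub,
            Polynomial.eval_pow, Polynomial.eval_X, Polynomial.eval_C]
          rw [sub_eq_zero, hk]
      -- now P = C c with c = r ≥ 0
      obtain ⟨z₀, hz₀⟩ := (circle_diff_infinite hS).nonempty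
      obtain ⟨r, hr, heq⟩ := hreal z₀ hz₀.1 hz₀.2
      simp only [Polynomial.eval_C, hN, zpow_zero, mul_one] at heq
      have hrpos : r ≠ 0 := by
        intro h; rw [h] at heq; exact hc0 (by exact_mod_cast heq)
      refine ⟨C ((Real.sqrt r : ℝ) : ℂ), ∅, Set.finite_empty, ?_, ?_, ?_⟩
      · simp only [ne_eq, Polynomial.C_eq_zero, Complex.ofReal_eq_zero]
        exact Real.sqrt_ne_zero'.mpr (lt_of_le_of_ne hr (Ne.symm hrpos))
      · intro z _ _
        simp only [Polynomial.eval_C, ne_eq, Complex.ofReal_eq_zero]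
        exact Real.sqrt_ne_zero'.mpr (lt_of_le_of_ne hr (Ne.symm hrpos))
      · intro z hz _
        simp only [Polynomial.eval_C, hN, zpow_zero, mul_one, heq]
        rw [Complex.normSq_ofReal, Real.mul_self_sqrt hr]

lemma nsq_factor {b z : ℂ} (hz : ‖z‖ = 1) :
    Complex.normSq (conj' b * z - 1) = Complex.normSq (z - b) := by
  have hz0 : z ≠ 0 := abs_one_ne_zero hz
  have h1 : conj' (conj' b * z - 1) = b * z⁻¹ - 1 := by
    rw [map_sub, map_mul, Complex.conj_conj, map_one, ← inv_eq_conj_of_circle hz]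
  have h2 : ‖conj' b * z - 1‖ = ‖b * z⁻¹ - 1‖ := by
    rw [← h1, Complex.norm_conj]
  have h3 : b * z⁻¹ - 1 = z⁻¹ * (b - z) := by field_simp
  calc Complex.normSq (conj' b * z - 1) = ‖conj' b * z - 1‖ ^ 2 := by
        rw [Complex.sq_norm]
    _ = ‖z - b‖ ^ 2 := by
        rw [h2, h3, norm_mul, norm_inv, hz, norm_sub_rev]
        norm_num
    _ = Complex.normSq (z - b) := Complex.sq_norm _


/-- Let `μ ∈ ℂ(z)` be a nonzero rational function with `μ* = μ` and `μ ≥ 0` on the unit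
circle (encoded pointwise: at each point of the unit circle where `μ` is defined, its value
is a nonnegative real).  Then there exists `V ∈ ℂ(z)` with neither zeros nor poles in the
region `0 < |z| < 1` such that `μ = V·V*` (encoded pointwise on the unit circle, where
`(V·V*)(z) = V(z)·conj(V(z)) = |V(z)|²`; two rational functions agreeing at all but finitely
many points of the circle are equal). -/
theorem exists_rational_sqrt_of_nonneg_on_circle (μ : RatFunc ℂ) (hμ : μ ≠ 0)
    (hpos : ∀ z : ℂ, ‖z‖ = 1 → μ.denom.eval z ≠ 0 →
      ∃ r : ℝ, 0 ≤ r ∧ μ.eval (RingHom.id ℂ) z = (r : ℂ)) :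
    ∃ V : RatFunc ℂ, V ≠ 0 ∧
      (∀ z : ℂ, 0 < ‖z‖ → ‖z‖ < 1 →
        V.num.eval z ≠ 0 ∧ V.denom.eval z ≠ 0) ∧
      (∀ z : ℂ, ‖z‖ = 1 → μ.denom.eval z ≠ 0 → V.denom.eval z ≠ 0 →
        μ.eval (RingHom.id ℂ) z = ((Complex.normSq (V.eval (RingHom.id ℂ) z) : ℝ) : ℂ)) := by
  classical
  have hn0 : μ.num ≠ 0 := RatFunc.num_ne_zero hμ
  have hd0 : μ.denom ≠ 0 := μ.denom_ne_zero
  set nn : ℂ[X] := μ.num with hnn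
  set d : ℂ[X] := μ.denom with hdd
  set M : ℕ := d.natDegree with hM
  set dtil : ℂ[X] := (d.map conj').reverse with hdtil
  have hmapd0 : d.map conj' ≠ 0 := by
    intro h
    exact hd0 ((Polynomial.map_eq_zero_iff (RingHom.injective conj')).mp h)
  have hdtil0 : dtil ≠ 0 := by
    rw [hdtil]
    intro h
    rw [Polynomial.reverse_eq_zero] at h
    exact hmapd0 h
  set P : ℂ[X] := nn * dtil with hPdef
  have hP0 : P ≠ 0 := mul_ne_zero hn0 hdtil0
  set S : Set ℂ := {z | d.eval z = 0} with hSdef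
  have hSfin : S.Finite := d.finite_setOf_isRoot hd0
  have hμeval : ∀ z : ℂ, μ.eval (RingHom.id ℂ) z = nn.eval z / d.eval z := fun z => rfl
  have hrealP : ∀ z : ℂ, ‖z‖ = 1 → z ∉ S →
      ∃ r : ℝ, 0 ≤ r ∧ P.eval z = (r : ℂ) * z ^ (M : ℤ) := by
    intro z hz hzS
    have hz0 : z ≠ 0 := abs_one_ne_zero hz
    have hdz : d.eval z ≠ 0 := hzS
    obtain ⟨r₀, hr₀, heq⟩ := hpos z hz hdz
    rw [hμeval z] at heq
    have hnz : nn.eval z = (r₀ : ℂ) * d.eval z := by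
      rw [div_eq_iff hdz] at heq; exact heq
    refine ⟨r₀ * Complex.normSq (d.eval z), mul_nonneg hr₀ (Complex.normSq_nonneg _), ?_⟩
    rw [hPdef, Polynomial.eval_mul, hdtil, eval_conj_reverse hz, hnz, zpow_natCast]
    push_cast
    rw [← Complex.mul_conj]
    ring
  obtain ⟨Q, S', hS'fin, hQ0, hQfree, hQeq⟩ :=
    core P.natDegree P hP0 le_rfl (M : ℤ) S hSfin hrealP
  set Qtil : ℂ[X] := (Q.map conj').reverse with hQtil
  set dq : ℕ := Q.natDegree with hdq
  -- polynomial identity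
  have hident : nn * dtil * X ^ dq = Q * Qtil * X ^ M := by
    apply poly_eq_of_circle (hSfin.union hS'fin)
    intro z hz hzS
    simp only [Set.mem_union, not_or] at hzS
    have hz0 : z ≠ 0 := abs_one_ne_zero hz
    have hPz := hQeq z hz hzS.2
    rw [hPdef, Polynomial.eval_mul] at hPz
    simp only [Polynomial.eval_mul, Polynomial.eval_pow, Polynomial.eval_X]
    have e1 : Qtil.eval z = z ^ dq * conj' (Q.eval z) := by
      rw [hQtil, hdq]; exact eval_conj_reverse hz
    have e2 : ((Complex.normSq (Q.eval z) : ℝ) : ℂ) = Q.eval z * conj' (Q.eval z) :=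
      (Complex.mul_conj _).symm
    calc nn.eval z * dtil.eval z * z ^ dq
        = ((Complex.normSq (Q.eval z) : ℝ) : ℂ) * z ^ (M : ℤ) * z ^ dq := by rw [hPz]
      _ = Q.eval z * Qtil.eval z * z ^ M := by rw [e1, e2, zpow_natCast]; ring
  -- build the denominator with roots outside the open disc
  have hdsplit : d = C d.leadingCoeff * (d.roots.map (fun b => X - C b)).prod :=
    (IsAlgClosed.splits d).eq_prod_roots
  set fac : ℂ → ℂ[X] := fun b => if ‖b‖ < 1 then C (conj' b) * X - C 1 else X - C b
    with hfac
  have hlead0 : d.leadingCoeff ≠ 0 := Polynomial.leadingCoeff_ne_zero.mpr hd0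
  have hfac_ne : ∀ b : ℂ, fac b ≠ 0 := by
    intro b
    simp only [hfac]
    split_ifs with h
    · intro hcontra
      have := congrArg (Polynomial.eval 0) hcontra
      simp at this
    · exact Polynomial.X_sub_C_ne_zero b
  set d₁ : ℂ[X] := C d.leadingCoeff * (d.roots.map fac).prod with hd₁def
  have hd₁0 : d₁ ≠ 0 := by
    rw [hd₁def]
    refine mul_ne_zero (by simpa using hlead0) (Multiset.prod_ne_zero ?_)
    intro hmem
    obtain ⟨b, _, hb⟩ := Multiset.mem_map.mp hmem
    exact hfac_ne b hb
  have hd₁free : ∀ z : ℂ, ‖z‖ < 1 → d₁.eval z ≠ 0 := by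
    intro z hz1
    rw [hd₁def, Polynomial.eval_mul, Polynomial.eval_C, Polynomial.eval_multiset_prod]
    refine mul_ne_zero hlead0 (Multiset.prod_ne_zero ?_)
    intro hmem
    rw [Multiset.map_map] at hmem
    obtain ⟨b, _, hb⟩ := Multiset.mem_map.mp hmem
    simp only [Function.comp_apply] at hb
    simp only [hfac] at hb
    revert hb
    split_ifs with h
    · simp only [Polynomial.eval_sub, Polynomial.eval_mul, Polynomial.eval_C,
        Polynomial.eval_X, Polynomial.eval_one]
      intro hb
      have h1 : conj' b * z = 1 := by
        have := sub_eq_zero.mp hb; simpa using this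
      have := congrArg (‖·‖) h1
      rw [norm_mul, Complex.norm_conj, norm_one] at this
      nlinarith [norm_nonneg b, norm_nonneg z]
    · simp only [Polynomial.eval_sub, Polynomial.eval_X, Polynomial.eval_C]
      intro hb
      have : z = b := sub_eq_zero.mp hb
      rw [this] at hz1
      exact absurd hz1 (not_lt.mpr (not_lt.mp h))
  have hd₁nsq : ∀ z : ℂ, ‖z‖ = 1 →
      Complex.normSq (d₁.eval z) = Complex.normSq (d.eval z) := by
    intro z hz
    conv_rhs => rw [hdsplit]
    rw [hd₁def]
    simp only [Polynomial.eval_mul, Polynomial.eval_C, Polynomial.eval_multiset_prod,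
      map_mul]
    congr 1
    rw [map_multiset_prod, map_multiset_prod]
    rw [Multiset.map_map, Multiset.map_map, Multiset.map_map, Multiset.map_map]
    refine congrArg Multiset.prod (Multiset.map_congr rfl ?_)
    intro b _
    simp only [Function.comp_apply]
    simp only [hfac]
    split_ifs with h
    · simp only [Polynomial.eval_sub, Polynomial.eval_mul, Polynomial.eval_C,
        Polynomial.eval_X, Polynomial.eval_one]
      exact nsq_factor hz
    · simp
  refine ⟨algebraMap ℂ[X] (RatFunc ℂ) Q / algebraMap ℂ[X] (RatFunc ℂ) d₁, ?_, ?_, ?_⟩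
  · exact div_ne_zero (RatFunc.algebraMap_ne_zero hQ0) (RatFunc.algebraMap_ne_zero hd₁0)
  · intro z hz0 hz1
    constructor
    · obtain ⟨t, ht⟩ := RatFunc.num_div_dvd Q hd₁0
      intro hcontra
      apply hQfree z hz0 hz1
      rw [ht, Polynomial.eval_mul, hcontra, zero_mul]
    · obtain ⟨t, ht⟩ := RatFunc.denom_div_dvd Q d₁
      intro hcontra
      apply hd₁free z hz1
      rw [ht, Polynomial.eval_mul, hcontra, zero_mul]
  · intro z hz hden hVden
    have hz0 : z ≠ 0 := abs_one_ne_zero hz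
    have hdz : d.eval z ≠ 0 := hden
    have hd₁z : d₁.eval z ≠ 0 := by
      intro h
      have := hd₁nsq z hz
      rw [h, map_zero] at this
      exact hdz (Complex.normSq_eq_zero.mp this.symm)
    set V : RatFunc ℂ := algebraMap ℂ[X] (RatFunc ℂ) Q / algebraMap ℂ[X] (RatFunc ℂ) d₁
      with hVdef
    have hV0 : V ≠ 0 :=
      div_ne_zero (RatFunc.algebraMap_ne_zero hQ0) (RatFunc.algebraMap_ne_zero hd₁0)
    have hcross : V.num * d₁ = Q * V.denom := by
      have h1 : algebraMap ℂ[X] (RatFunc ℂ) V.num / algebraMap ℂ[X] (RatFunc ℂ) V.denom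
          = algebraMap ℂ[X] (RatFunc ℂ) Q / algebraMap ℂ[X] (RatFunc ℂ) d₁ := by
        rw [RatFunc.num_div_denom V]
      rw [div_eq_div_iff (RatFunc.algebraMap_ne_zero (RatFunc.denom_ne_zero V))
        (RatFunc.algebraMap_ne_zero hd₁0), ← map_mul, ← map_mul] at h1
      exact RatFunc.algebraMap_injective ℂ h1
    have hdenz : V.denom.eval z ≠ 0 := hVden
    have hevalV : V.eval (RingHom.id ℂ) z = Q.eval z / d₁.eval z := by
      have h0 : V.eval (RingHom.id ℂ) z = V.num.eval z / V.denom.eval z := rfl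
      rw [h0, div_eq_div_iff hdenz hd₁z]
      have := congrArg (Polynomial.eval z) hcross
      simpa only [Polynomial.eval_mul] using this
    have hev := congrArg (Polynomial.eval z) hident
    simp only [Polynomial.eval_mul, Polynomial.eval_pow, Polynomial.eval_X] at hev
    have e1 : dtil.eval z = z ^ M * conj' (d.eval z) := by
      rw [hdtil, hM]; exact eval_conj_reverse hz
    have e2 : Qtil.eval z = z ^ dq * conj' (Q.eval z) := by
      rw [hQtil, hdq]; exact eval_conj_reverse hz
    rw [e1, e2] at hev
    have e3 : ((Complex.normSq (Q.eval z) : ℝ) : ℂ) = Q.eval z * conj' (Q.eval z) :=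
      (Complex.mul_conj _).symm
    have hkey2 : nn.eval z * conj' (d.eval z) = ((Complex.normSq (Q.eval z) : ℝ) : ℂ) := by
      have hcancel : (z ^ M * z ^ dq : ℂ) ≠ 0 :=
        mul_ne_zero (pow_ne_zero _ hz0) (pow_ne_zero _ hz0)
      apply mul_right_cancel₀ hcancel
      rw [e3]
      linear_combination hev
    rw [hμeval z, hevalV, map_div₀, hd₁nsq z hz]
    push_cast
    rw [← hkey2]
    have e4 : ((Complex.normSq (d.eval z) : ℝ) : ℂ) = d.eval z * conj' (d.eval z) :=
      (Complex.mul_conj _).symm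
    rw [e4]
    have hconjd : conj' (d.eval z) ≠ 0 := star_ne_zero.mpr hdz
    field_simp
end

section
/- Let μ ∈ ℂ(z) be a nonzero rational function and define μ*(z) := conj(μ(1/conj(z))). Assume μ* = μ. Then: (1) for every nonzero complex number z₀, the order of μ at z₀ equals the order of μ at 1/conj(z₀) (so the divisor of μ on ℂ^× is symmetric under z ↦ 1/conj(z)), and the order of μ at 0 equals its order at ∞; (2) if moreover μ(z) ≥ 0 for all z with |z|=1 where μ is defined, then for every z₀ with |z₀| = 1 the order of μ at z₀ is even. -/
/-- Order of a rational function at a point `z₀ ∈ ℂ`: multiplicity of `z₀` as a zero of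
the numerator minus its multiplicity as a zero of the denominator. -/
noncomputable def ratOrd (f : RatFunc ℂ) (z₀ : ℂ) : ℤ :=
  (Polynomial.rootMultiplicity z₀ f.num : ℤ) - (Polynomial.rootMultiplicity z₀ f.denom : ℤ)

/-- Order of a rational function at `∞`: `deg(denominator) − deg(numerator)`. -/
noncomputable def ratOrdInf (f : RatFunc ℂ) : ℤ :=
  (f.denom.natDegree : ℤ) - (f.num.natDegree : ℤ)

namespace RatOrdAux

open Polynomial Complex

lemma evalRev (p : ℂ[X]) {w : ℂ} (hw : w ≠ 0) :
    p.reverse.eval w = w ^ p.natDegree * p.eval w⁻¹ := by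
  letI : Invertible w⁻¹ := invertibleOfNonzero (inv_ne_zero hw)
  have h := Polynomial.eval₂_reverse_mul_pow (RingHom.id ℂ) w⁻¹ p
  rw [invOf_eq_inv, inv_inv] at h
  rw [show eval₂ (RingHom.id ℂ) w p.reverse = p.reverse.eval w from rfl,
    show eval₂ (RingHom.id ℂ) w⁻¹ p = p.eval w⁻¹ from rfl] at h
  rw [← h, mul_left_comm, ← mul_pow, mul_inv_cancel₀ hw, one_pow, mul_one]

lemma revPow (f : ℂ[X]) (k : ℕ) : (f ^ k).reverse = f.reverse ^ k := by
  induction k with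
  | zero => simp [Polynomial.reverse]
  | succ n ih => rw [pow_succ, Polynomial.reverse_mul_of_domain, ih, pow_succ]

lemma revLin {c : ℂ} (hc : c ≠ 0) :
    (X - C c).reverse = C (-c) * (X - C c⁻¹) := by
  have h1 : (X - C c).natDegree = 1 := by
    simpa using Polynomial.natDegree_X_sub_C c
  rw [Polynomial.reverse, h1, Polynomial.reflect_sub, Polynomial.reflect_C,
    Polynomial.reflect_one_X]
  rw [mul_sub, mul_comm, pow_one, ← Polynomial.C_mul]
  simp [hc, sub_eq_iff_eq_add]

lemma rmRev (p : ℂ[X]) (hp : p ≠ 0) {z : ℂ} (hz : z ≠ 0) :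
    rootMultiplicity z p.reverse = rootMultiplicity z⁻¹ p := by
  set k := rootMultiplicity z⁻¹ p with hk
  set q := p /ₘ (X - C z⁻¹) ^ k with hqdef
  have hfac : (X - C z⁻¹) ^ k * q = p := Polynomial.pow_mul_divByMonic_rootMultiplicity_eq p z⁻¹
  have hq0 : q ≠ 0 := by
    intro h; rw [h, mul_zero] at hfac; exact hp hfac.symm
  have hqz : q.eval z⁻¹ ≠ 0 := Polynomial.eval_divByMonic_pow_rootMultiplicity_ne_zero z⁻¹ hp
  have hrev : p.reverse = (C (-z⁻¹)) ^ k * ((X - C z) ^ k * q.reverse) := by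
    rw [← hfac, Polynomial.reverse_mul_of_domain, revPow, revLin (inv_ne_zero hz)]
    rw [inv_inv, mul_pow]; ring
  have hC : (C (-z⁻¹) : ℂ[X]) ^ k ≠ 0 := pow_ne_zero _ (by simp [hz])
  have hXz : ((X - C z : ℂ[X])) ^ k ≠ 0 := pow_ne_zero _ (Polynomial.X_sub_C_ne_zero z)
  have hqrev : q.reverse ≠ 0 := by simp [Polynomial.reverse_eq_zero, hq0]
  rw [hrev, Polynomial.rootMultiplicity_mul (mul_ne_zero hC (mul_ne_zero hXz hqrev)),
    Polynomial.rootMultiplicity_mul (mul_ne_zero hXz hqrev)]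
  rw [Polynomial.rootMultiplicity_eq_zero (by simp [Polynomial.IsRoot, hz]),
    Polynomial.rootMultiplicity_X_sub_C_pow,
    Polynomial.rootMultiplicity_eq_zero (by
      simp only [Polynomial.IsRoot]
      rw [evalRev q hz]
      exact mul_ne_zero (pow_ne_zero _ hz) hqz)]
  simp


lemma rmConj (p : ℂ[X]) (z : ℂ) :
    rootMultiplicity z (p.map (starRingEnd ℂ)) = rootMultiplicity ((starRingEnd ℂ) z) p := by
  have h := Polynomial.eq_rootMultiplicity_map (p := p)
    (f := starRingEnd ℂ) (starRingEnd ℂ).injective ((starRingEnd ℂ) z)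
  rw [Complex.conj_conj] at h
  exact h.symm

lemma starKey (μ : RatFunc ℂ) (hμ : μ ≠ 0)
    (hstar : ∀ z : ℂ, z ≠ 0 → μ.denom.eval z ≠ 0 →
      μ.denom.eval (((starRingEnd ℂ) z)⁻¹) ≠ 0 →
      μ.eval (RingHom.id ℂ) z =
        (starRingEnd ℂ) (μ.eval (RingHom.id ℂ) (((starRingEnd ℂ) z)⁻¹))) :
    μ.num * (μ.denom.map (starRingEnd ℂ)).reverse * X ^ μ.num.natDegree =
      (μ.num.map (starRingEnd ℂ)).reverse * μ.denom * X ^ μ.denom.natDegree := by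
  set a := μ.num
  set b := μ.denom
  have hb0 : b ≠ 0 := μ.denom_ne_zero
  set D : ℂ[X] := a * (b.map (starRingEnd ℂ)).reverse * X ^ a.natDegree -
      (a.map (starRingEnd ℂ)).reverse * b * X ^ b.natDegree with hD
  have hroot : ∀ w : ℂ, w ≠ 0 → b.eval w ≠ 0 → b.eval (((starRingEnd ℂ) w)⁻¹) ≠ 0 →
      D.IsRoot w := by
    intro w hw hbw hbv
    set v := ((starRingEnd ℂ) w)⁻¹ with hv
    have hv0 : v ≠ 0 := inv_ne_zero (by simpa using hw)
    have hcv : (starRingEnd ℂ) v = w⁻¹ := by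
      rw [hv, map_inv₀, Complex.conj_conj]
    have heval : ∀ (p : ℂ[X]), (starRingEnd ℂ) (p.eval v) =
        (p.map (starRingEnd ℂ)).eval w⁻¹ := by
      intro p
      rw [← hcv, Polynomial.eval_map, Polynomial.eval₂_at_apply]
    have hmain := hstar w hw hbw hbv
    rw [RatFunc.eval, RatFunc.eval] at hmain
    rw [show Polynomial.eval₂ (RingHom.id ℂ) w μ.num = a.eval w from rfl,
      show Polynomial.eval₂ (RingHom.id ℂ) w μ.denom = b.eval w from rfl,
      show Polynomial.eval₂ (RingHom.id ℂ) v μ.num = a.eval v from rfl,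
      show Polynomial.eval₂ (RingHom.id ℂ) v μ.denom = b.eval v from rfl] at hmain
    rw [map_div₀, heval, heval] at hmain
    have hbmv : (b.map (starRingEnd ℂ)).eval w⁻¹ ≠ 0 := by
      rw [← heval]; simpa using hbv
    have hcross : a.eval w * (b.map (starRingEnd ℂ)).eval w⁻¹ =
        (a.map (starRingEnd ℂ)).eval w⁻¹ * b.eval w :=
      (div_eq_div_iff hbw hbmv).mp hmain
    have hna : (a.map (starRingEnd ℂ)).natDegree = a.natDegree :=
      Polynomial.natDegree_map_eq_of_injective (starRingEnd ℂ).injective a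
    have hnb : (b.map (starRingEnd ℂ)).natDegree = b.natDegree :=
      Polynomial.natDegree_map_eq_of_injective (starRingEnd ℂ).injective b
    have e1 : (b.map (starRingEnd ℂ)).reverse.eval w =
        w ^ b.natDegree * (b.map (starRingEnd ℂ)).eval w⁻¹ := by
      rw [evalRev _ hw, hnb]
    have e2 : (a.map (starRingEnd ℂ)).reverse.eval w =
        w ^ a.natDegree * (a.map (starRingEnd ℂ)).eval w⁻¹ := by
      rw [evalRev _ hw, hna]
    simp only [Polynomial.IsRoot, hD, Polynomial.eval_sub, Polynomial.eval_mul,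
      Polynomial.eval_pow, Polynomial.eval_X, e1, e2]
    ring_nf
    linear_combination (w ^ (a.natDegree + b.natDegree)) * hcross
  have hDzero : D = 0 := by
    by_contra hDne
    have hfin : Set.Finite {x : ℂ | D.IsRoot x} := Polynomial.finite_setOf_isRoot hDne
    have hinj : Function.Injective (fun w : ℂ => ((starRingEnd ℂ) w)⁻¹) := by
      have : Function.Involutive (fun w : ℂ => ((starRingEnd ℂ) w)⁻¹) := by
        intro w; simp [map_inv₀]
      exact this.injective
    have hbad : Set.Finite ({(0:ℂ)} ∪ {x | b.IsRoot x} ∪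
        (fun w : ℂ => ((starRingEnd ℂ) w)⁻¹) ⁻¹' {x | b.IsRoot x}) := by
      refine ((Set.finite_singleton _).union (Polynomial.finite_setOf_isRoot hb0)).union
        ((Polynomial.finite_setOf_isRoot hb0).preimage hinj.injOn)
    have hsub : Set.univ ⊆ {x : ℂ | D.IsRoot x} ∪ ({(0:ℂ)} ∪ {x | b.IsRoot x} ∪
        (fun w : ℂ => ((starRingEnd ℂ) w)⁻¹) ⁻¹' {x | b.IsRoot x}) := by
      intro w _
      by_cases h1 : w = 0
      · exact Or.inr (Or.inl (Or.inl h1))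
      by_cases h2 : b.eval w = 0
      · exact Or.inr (Or.inl (Or.inr h2))
      by_cases h3 : b.eval (((starRingEnd ℂ) w)⁻¹) = 0
      · exact Or.inr (Or.inr h3)
      · exact Or.inl (hroot w h1 h2 h3)
    have : Set.Finite (Set.univ : Set ℂ) :=
      Set.Finite.subset (hfin.union hbad) hsub
    exact Set.infinite_univ this
  exact sub_eq_zero.mp hDzero


lemma ordersOfKey (a b : ℂ[X]) (ha : a ≠ 0) (hb : b ≠ 0)
    (key : a * (b.map (starRingEnd ℂ)).reverse * X ^ a.natDegree =
      (a.map (starRingEnd ℂ)).reverse * b * X ^ b.natDegree) :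
    (∀ z₀ : ℂ, z₀ ≠ 0 →
      (rootMultiplicity z₀ a : ℤ) - rootMultiplicity z₀ b =
      (rootMultiplicity ((starRingEnd ℂ) z₀)⁻¹ a : ℤ) - rootMultiplicity ((starRingEnd ℂ) z₀)⁻¹ b) ∧
    (rootMultiplicity 0 a : ℤ) - rootMultiplicity 0 b = (b.natDegree : ℤ) - a.natDegree := by
  have hbm : b.map (starRingEnd ℂ) ≠ 0 :=
    (Polynomial.map_ne_zero_iff (starRingEnd ℂ).injective).mpr hb
  have ham : a.map (starRingEnd ℂ) ≠ 0 :=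
    (Polynomial.map_ne_zero_iff (starRingEnd ℂ).injective).mpr ha
  have hbr : (b.map (starRingEnd ℂ)).reverse ≠ 0 := by
    simp [Polynomial.reverse_eq_zero, hbm]
  have har : (a.map (starRingEnd ℂ)).reverse ≠ 0 := by
    simp [Polynomial.reverse_eq_zero, ham]
  have hX : ∀ n : ℕ, (X : ℂ[X]) ^ n ≠ 0 := fun n => pow_ne_zero _ Polynomial.X_ne_zero
  have hL : ∀ z : ℂ, rootMultiplicity z (a * (b.map (starRingEnd ℂ)).reverse * X ^ a.natDegree)
      = rootMultiplicity z a + rootMultiplicity z (b.map (starRingEnd ℂ)).reverse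
        + rootMultiplicity z ((X:ℂ[X]) ^ a.natDegree) := by
    intro z
    rw [Polynomial.rootMultiplicity_mul (mul_ne_zero (mul_ne_zero ha hbr) (hX _)),
      Polynomial.rootMultiplicity_mul (mul_ne_zero ha hbr)]
  have hR : ∀ z : ℂ, rootMultiplicity z ((a.map (starRingEnd ℂ)).reverse * b * X ^ b.natDegree)
      = rootMultiplicity z (a.map (starRingEnd ℂ)).reverse + rootMultiplicity z b
        + rootMultiplicity z ((X:ℂ[X]) ^ b.natDegree) := by
    intro z
    rw [Polynomial.rootMultiplicity_mul (mul_ne_zero (mul_ne_zero har hb) (hX _)),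
      Polynomial.rootMultiplicity_mul (mul_ne_zero har hb)]
  have hXpow : ∀ (n : ℕ), rootMultiplicity (0:ℂ) ((X:ℂ[X]) ^ n) = n := by
    intro n
    have := Polynomial.rootMultiplicity_X_sub_C_pow (0:ℂ) n
    simpa using this
  have hXz : ∀ (z : ℂ), z ≠ 0 → ∀ (n : ℕ), rootMultiplicity z ((X:ℂ[X]) ^ n) = 0 := by
    intro z hz n
    exact Polynomial.rootMultiplicity_eq_zero (by simp [Polynomial.IsRoot, hz])
  constructor
  · intro z₀ hz₀
    have hmulL := hL z₀
    rw [key, hR z₀, hXz _ hz₀, hXz _ hz₀] at hmulL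
    have hrb : rootMultiplicity z₀ (b.map (starRingEnd ℂ)).reverse =
        rootMultiplicity ((starRingEnd ℂ) z₀)⁻¹ b := by
      rw [rmRev _ hbm hz₀, rmConj, map_inv₀]
    have hra : rootMultiplicity z₀ (a.map (starRingEnd ℂ)).reverse =
        rootMultiplicity ((starRingEnd ℂ) z₀)⁻¹ a := by
      rw [rmRev _ ham hz₀, rmConj, map_inv₀]
    rw [hrb, hra] at hmulL
    omega
  · have hmulL := hL 0
    rw [key, hR 0, hXpow, hXpow] at hmulL
    have h0 : ∀ (p : ℂ[X]), p ≠ 0 → rootMultiplicity (0:ℂ) (p.map (starRingEnd ℂ)).reverse = 0 := by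
      intro p hp
      refine Polynomial.rootMultiplicity_eq_zero ?_
      simp only [Polynomial.IsRoot, ← Polynomial.coeff_zero_eq_eval_zero,
        Polynomial.coeff_zero_reverse]
      exact Polynomial.leadingCoeff_ne_zero.mpr
        ((Polynomial.map_ne_zero_iff (starRingEnd ℂ).injective).mpr hp)
    rw [h0 a ha, h0 b hb] at hmulL
    omega


lemma zpowKey (u v p : ℂ) (hu : u ≠ 0) (hv : v ≠ 0) (hp : p ≠ 0) (huv : -p * v = u)
    (j : ℤ) (k : ℕ) :
    u * (-p) ^ j * (u * v) ^ (j + (k:ℤ)) = u ^ (2*j+1+(k:ℤ)) * v ^ (k:ℤ) := by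
  have hnp : (-p : ℂ) ≠ 0 := neg_ne_zero.mpr hp
  have h1 : (u*v) ^ (j+(k:ℤ)) = u^j * v^j * (u^(k:ℤ) * v^(k:ℤ)) := by
    rw [mul_zpow, zpow_add₀ hu, zpow_add₀ hv]; ring
  have h2 : (-p)^j * v^j = u^j := by rw [← mul_zpow, huv]
  have h3 : u ^ (2*j+1+(k:ℤ)) = u^j * u^j * u * u^(k:ℤ) := by
    rw [show 2*j+1+(k:ℤ) = j + (j + (1 + (k:ℤ))) by ring, zpow_add₀ hu, zpow_add₀ hu,
      zpow_add₀ hu, zpow_one]; ring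
  rw [h1, h3]
  generalize u^j = x at h2 ⊢
  generalize v^j = y at h2 ⊢
  generalize u^(k:ℤ) = xx
  generalize v^(k:ℤ) = yy
  generalize (-p)^j = P at h2 ⊢
  linear_combination (u * xx * yy * x) * h2

lemma sinIdent (t : ℝ) :
    Complex.exp (↑t * Complex.I) - 1 =
      ((2 * Real.sin (t/2) : ℝ) : ℂ) * (Complex.I * Complex.exp (↑(t/2) * Complex.I)) := by
  have h2 : (↑t : ℂ) * I = ↑(t/2) * I + ↑(t/2) * I := by push_cast; ring
  rw [h2, Complex.exp_add, Complex.exp_mul_I]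
  push_cast
  linear_combination Complex.sin_sq_add_cos_sq ((↑t : ℂ)/2) - (Complex.sin ((↑t:ℂ)/2))^2 * Complex.I_sq

lemma auxContra (c : ℂ) (s : ℝ) (hcs : c.re * s ≤ 0) :
    ‖c‖ ≤ ‖(s:ℂ) - c‖ := by
  rw [Complex.norm_def, Complex.norm_def]
  apply Real.sqrt_le_sqrt
  rw [Complex.normSq_apply, Complex.normSq_apply]
  simp only [Complex.sub_re, Complex.ofReal_re, Complex.sub_im, Complex.ofReal_im]
  nlinarith [sq_nonneg s]

lemma existsGood (b : ℂ[X]) (hb : b ≠ 0) (z₀ : ℂ) (hz₀ : z₀ ≠ 0) (α β : ℝ) (hαβ : α < β)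
    (hsub : Set.Ioo α β ⊆ Set.Ioo (-Real.pi) Real.pi) :
    ∃ t ∈ Set.Ioo α β, b.eval (z₀ * Complex.exp (↑t * Complex.I)) ≠ 0 := by
  set Z : ℝ → ℂ := fun t => z₀ * Complex.exp (↑t * Complex.I) with hZ
  have hinj : Set.InjOn Z (Set.Ioo (-Real.pi) Real.pi) := by
    intro s hs t ht hst
    have hexp : Complex.exp (↑s * I) = Complex.exp (↑t * I) :=
      mul_left_cancel₀ hz₀ hst
    have h1 : Complex.exp ((↑s - ↑t) * I) = 1 := by
      rw [sub_mul, Complex.exp_sub, hexp, div_self (Complex.exp_ne_zero _)]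
    obtain ⟨n, hn⟩ := Complex.exp_eq_one_iff.mp h1
    have him : s - t = n * (2 * Real.pi) := by
      have := congrArg Complex.im hn
      simpa using this
    have hn0 : n = 0 := by
      rcases Set.mem_Ioo.mp hs with ⟨hs1, hs2⟩
      rcases Set.mem_Ioo.mp ht with ⟨ht1, ht2⟩
      by_contra hne
      have h1le : (1:ℝ) ≤ |(n:ℝ)| := by
        rw [← Int.cast_abs]
        exact_mod_cast Int.one_le_abs (by omega)
      have hpi := Real.pi_pos
      have : |s - t| = |(n:ℝ)| * (2 * Real.pi) := by
        rw [him, abs_mul, abs_of_pos (show (0:ℝ) < 2*Real.pi by linarith)]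
      have habs : |s - t| < 2 * Real.pi := by
        rw [abs_sub_lt_iff]; constructor <;> linarith
      nlinarith
    rw [hn0] at him
    push_cast at him
    linarith [him]
  have hfin : Set.Finite (Set.Ioo α β ∩ {t : ℝ | b.eval (Z t) = 0}) := by
    apply Set.Finite.of_finite_image (f := Z)
    · apply Set.Finite.subset (Polynomial.finite_setOf_isRoot hb)
      rintro _ ⟨t, ⟨_, ht⟩, rfl⟩; exact ht
    · exact hinj.mono (fun x hx => hsub hx.1)
  obtain ⟨t, ht⟩ := ((Set.Ioo_infinite hαβ).diff hfin).nonempty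
  exact ⟨t, ht.1, fun hbad => ht.2 ⟨ht.1, hbad⟩⟩

lemma part3 (a b : ℂ[X]) (ha0 : a ≠ 0) (hb0 : b ≠ 0)
    (hpos : ∀ z : ℂ, ‖z‖ = 1 → b.eval z ≠ 0 →
      ∃ r : ℝ, 0 ≤ r ∧ a.eval z / b.eval z = (r:ℂ))
    (z₀ : ℂ) (habs : ‖z₀‖ = 1) :
    Even ((rootMultiplicity z₀ a : ℤ) - rootMultiplicity z₀ b) := by
  have hz₀ : z₀ ≠ 0 := by
    intro h; rw [h] at habs; simp at habs
  set ka := rootMultiplicity z₀ a with hka0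
  set kb := rootMultiplicity z₀ b with hkb0
  set A := a /ₘ (X - C z₀) ^ ka with hAdef
  set B := b /ₘ (X - C z₀) ^ kb with hBdef
  have hfa : (X - C z₀) ^ ka * A = a := Polynomial.pow_mul_divByMonic_rootMultiplicity_eq a z₀
  have hfb : (X - C z₀) ^ kb * B = b := Polynomial.pow_mul_divByMonic_rootMultiplicity_eq b z₀
  have hA : A.eval z₀ ≠ 0 := Polynomial.eval_divByMonic_pow_rootMultiplicity_ne_zero z₀ ha0
  have hB : B.eval z₀ ≠ 0 := Polynomial.eval_divByMonic_pow_rootMultiplicity_ne_zero z₀ hb0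
  by_contra hodd
  obtain ⟨j, hj⟩ := Int.not_even_iff_odd.mp hodd
  set Z : ℝ → ℂ := fun t => z₀ * Complex.exp (↑t * Complex.I) with hZdef
  have hZ0 : Z 0 = z₀ := by simp [hZdef]
  have hZcont : Continuous Z :=
    continuous_const.mul (Complex.continuous_exp.comp (Complex.continuous_ofReal.mul continuous_const))
  have hZne : ∀ t, Z t ≠ 0 := fun t => mul_ne_zero hz₀ (Complex.exp_ne_zero _)
  have hZabs : ∀ t, ‖Z t‖ = 1 := by
    intro t
    rw [hZdef]
    simp only [norm_mul, habs, Complex.norm_exp_ofReal_mul_I, one_mul]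
  set h : ℝ → ℂ := fun t => Complex.I * z₀ * Complex.exp (↑(t/2) * Complex.I) *
      (-(z₀ * Z t)) ^ j * A.eval (Z t) * (starRingEnd ℂ) (B.eval (Z t)) with hhdef
  have hc0 : h 0 ≠ 0 := by
    rw [hhdef]
    simp only [hZ0]
    refine mul_ne_zero (mul_ne_zero (mul_ne_zero (mul_ne_zero ?_ ?_) ?_) hA) ?_
    · exact mul_ne_zero Complex.I_ne_zero hz₀
    · exact Complex.exp_ne_zero _
    · exact zpow_ne_zero _ (neg_ne_zero.mpr (mul_ne_zero hz₀ hz₀))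
    · rw [starRingEnd_apply]; exact star_ne_zero.mpr hB
  have hcont : ContinuousAt h 0 := by
    rw [hhdef]
    refine ContinuousAt.mul (ContinuousAt.mul (ContinuousAt.mul ?_ ?_) ?_) ?_
    · exact ((continuous_const.mul (Complex.continuous_exp.comp
        ((Complex.continuous_ofReal.comp (continuous_id.div_const 2)).mul
          continuous_const)))).continuousAt
    · refine ContinuousAt.comp (f := fun t : ℝ => -(z₀ * Z t)) (g := fun x : ℂ => x ^ j)
        ?_ ((continuous_const.mul hZcont).neg.continuousAt)
      refine continuousAt_zpow₀ (-(z₀ * Z 0)) j (Or.inl ?_)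
      rw [hZ0]
      exact neg_ne_zero.mpr (mul_ne_zero hz₀ hz₀)
    · exact ((A.continuous).comp hZcont).continuousAt
    · exact (RCLike.continuous_conj.comp ((B.continuous).comp hZcont)).continuousAt
  have Hreal : ∀ t : ℝ, 0 < |t| → |t| < Real.pi → b.eval (Z t) ≠ 0 →
      ∃ s : ℝ, h t = (s:ℂ) ∧ 0 ≤ s * Real.sin (t/2) := by
    intro t hta htb hbz
    have htne : t ≠ 0 := by
      intro h0; rw [h0] at hta; simp at hta
    set z := Z t with hzdef
    have hzabs : ‖z‖ = 1 := hZabs t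
    have hzz₀ : z ≠ z₀ := by
      intro hEq
      have hexp1 : Complex.exp (↑t * Complex.I) = 1 := by
        have : z₀ * Complex.exp (↑t * Complex.I) = z₀ * 1 := by
          rw [mul_one]; exact hEq
        exact mul_left_cancel₀ hz₀ this
      obtain ⟨n, hn⟩ := Complex.exp_eq_one_iff.mp hexp1
      have him : t = n * (2 * Real.pi) := by
        have := congrArg Complex.im hn
        simpa using this
      have hpi := Real.pi_pos
      rcases eq_or_ne n 0 with h0 | h0
      · rw [h0] at him; push_cast at him; rw [him] at hta; simp at hta
      · have h1le : (1:ℝ) ≤ |(n:ℝ)| := by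
          rw [← Int.cast_abs]; exact_mod_cast Int.one_le_abs h0
        have : |t| = |(n:ℝ)| * (2 * Real.pi) := by
          rw [him, abs_mul, abs_of_pos (show (0:ℝ) < 2*Real.pi by linarith)]
        nlinarith
    have hu : z - z₀ ≠ 0 := sub_ne_zero.mpr hzz₀
    have hcu0 : (starRingEnd ℂ) (z - z₀) ≠ 0 := by
      rw [starRingEnd_apply]; exact star_ne_zero.mpr hu
    have hp0 : z₀ * z ≠ 0 := mul_ne_zero hz₀ (hZne t)
    have hpv : -(z₀ * z) * ((starRingEnd ℂ) (z - z₀)) = z - z₀ := by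
      have hzinv : (starRingEnd ℂ) z = z⁻¹ := (Complex.inv_eq_conj hzabs).symm
      have hz₀inv : (starRingEnd ℂ) z₀ = z₀⁻¹ := (Complex.inv_eq_conj habs).symm
      rw [map_sub, hzinv, hz₀inv]
      have hzne : z ≠ 0 := hZne t
      field_simp
      ring
    obtain ⟨r, hr0, hrval⟩ := hpos z hzabs hbz
    have haz : a.eval z = ↑r * b.eval z := by
      rw [div_eq_iff hbz] at hrval
      exact hrval
    have hfaz : a.eval z = (z - z₀) ^ ka * A.eval z := by
      conv_lhs => rw [← hfa]
      simp [Polynomial.eval_mul, Polynomial.eval_pow]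
    have hfbz : b.eval z = (z - z₀) ^ kb * B.eval z := by
      conv_lhs => rw [← hfb]
      simp [Polynomial.eval_mul, Polynomial.eval_pow]
    set w := Complex.normSq (z - z₀) with hwdef
    have hw0 : 0 < w := Complex.normSq_pos.mpr hu
    have hwu : ((w:ℝ) : ℂ) = (z - z₀) * (starRingEnd ℂ) (z - z₀) := (Complex.mul_conj _).symm
    have habz : a.eval z * (starRingEnd ℂ) (b.eval z) =
        ((r * Complex.normSq (b.eval z) : ℝ) : ℂ) := by
      rw [haz, mul_assoc, Complex.mul_conj]
      push_cast
      ring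
    have hsin' : ((2 * Real.sin (t/2) : ℝ) : ℂ) *
        (Complex.I * z₀ * Complex.exp (↑(t/2) * Complex.I)) = z - z₀ := by
      have hid := sinIdent t
      have hu' : z - z₀ = z₀ * (Complex.exp (↑t * Complex.I) - 1) := by
        rw [hzdef, hZdef]; ring
      rw [hu', hid]; ring
    have hkey := zpowKey (z - z₀) ((starRingEnd ℂ) (z - z₀)) (z₀ * z) hu hcu0 hp0 hpv j kb
    have hkaz : (z - z₀) ^ (2*j+1+(kb:ℤ)) = (z - z₀) ^ ka := by
      rw [show 2*j+1+(kb:ℤ) = (ka:ℤ) by omega, zpow_natCast]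
    have hmain : h t * ((2 * Real.sin (t/2) : ℝ) : ℂ) * (((w:ℝ)):ℂ) ^ (j + (kb:ℤ)) =
        ((r * Complex.normSq (b.eval z) : ℝ) : ℂ) := by
      rw [← habz, hfaz, hfbz, map_mul, map_pow]
      calc h t * ↑(2 * Real.sin (t/2)) * ((w:ℝ):ℂ) ^ (j + (kb:ℤ))
          = (↑(2 * Real.sin (t/2)) * (Complex.I * z₀ * Complex.exp (↑(t/2) * Complex.I))) *
            (-(z₀ * z)) ^ j * (((w:ℝ):ℂ) ^ (j + (kb:ℤ))) *
            (A.eval z * (starRingEnd ℂ) (B.eval z)) := by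
            rw [hhdef]
            simp only [← hzdef]
            ring
        _ = ((z - z₀) * (-(z₀ * z)) ^ j * (((z - z₀) * (starRingEnd ℂ) (z - z₀)) ^ (j + (kb:ℤ)))) *
            (A.eval z * (starRingEnd ℂ) (B.eval z)) := by
            rw [hsin', hwu]
        _ = ((z - z₀) ^ ka * ((starRingEnd ℂ) (z - z₀)) ^ (kb:ℤ)) *
            (A.eval z * (starRingEnd ℂ) (B.eval z)) := by
            rw [hkey, hkaz]
        _ = (z - z₀) ^ ka * A.eval z * (((starRingEnd ℂ) (z - z₀)) ^ kb *
            (starRingEnd ℂ) (B.eval z)) := by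
            rw [zpow_natCast]; ring
    have hsin_pos : 0 < t → 0 < Real.sin (t/2) := by
      intro ht
      have h2 : t/2 < Real.pi := by
        rw [abs_of_pos ht] at htb
        linarith [Real.pi_pos]
      exact Real.sin_pos_of_pos_of_lt_pi (by linarith) h2
    have hsin_neg : t < 0 → Real.sin (t/2) < 0 := by
      intro ht
      have h2 : -Real.pi < t/2 := by
        rw [abs_of_neg ht] at htb
        linarith [Real.pi_pos]
      exact Real.sin_neg_of_neg_of_neg_pi_lt (by linarith) h2
    have hsinne : Real.sin (t/2) ≠ 0 := by
      rcases htne.lt_or_gt with hlt | hgt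
      · exact ne_of_lt (hsin_neg hlt)
      · exact ne_of_gt (hsin_pos hgt)
    set W := w ^ (j + (kb:ℤ)) with hW
    have hWpos : 0 < W := zpow_pos hw0 _
    set s := (r * Complex.normSq (b.eval z)) / (2 * Real.sin (t/2) * W) with hs
    have hYne : ((2 * Real.sin (t/2) : ℝ) : ℂ) * (((w:ℝ)):ℂ) ^ (j + (kb:ℤ)) ≠ 0 := by
      apply mul_ne_zero
      · exact Complex.ofReal_ne_zero.mpr (by positivity)
      · rw [← Complex.ofReal_zpow]
        exact Complex.ofReal_ne_zero.mpr (ne_of_gt hWpos)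
    have hsW : s * (2 * Real.sin (t/2) * W) = r * Complex.normSq (b.eval z) := by
      rw [hs]; field_simp
    refine ⟨s, ?_, ?_⟩
    · apply mul_right_cancel₀ hYne
      rw [show h t * (((2 * Real.sin (t/2) : ℝ):ℂ) * ((w:ℝ):ℂ) ^ (j + (kb:ℤ))) =
        h t * ((2 * Real.sin (t/2) : ℝ):ℂ) * ((w:ℝ):ℂ) ^ (j + (kb:ℤ)) by ring, hmain]
      rw [← Complex.ofReal_zpow, ← hW]
      rw [show ((s:ℝ):ℂ) * (((2 * Real.sin (t/2) : ℝ):ℂ) * ((W:ℝ):ℂ)) =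
        (((s * (2 * Real.sin (t/2) * W) : ℝ)):ℂ) by push_cast; ring, hsW]
    · have hss : s * Real.sin (t/2) = r * Complex.normSq (b.eval z) / (2 * W) := by
        rw [hs]; field_simp
      rw [hss]
      apply div_nonneg (mul_nonneg hr0 (Complex.normSq_nonneg _)) (by positivity)
  obtain ⟨δ, hδ0, hδ⟩ := Metric.continuousAt_iff.mp hcont ‖h 0‖
    (by exact norm_pos_iff.mpr hc0)
  set m := min δ Real.pi with hmdef
  have hm0 : 0 < m := lt_min hδ0 Real.pi_pos
  have hmδ : m ≤ δ := min_le_left _ _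
  have hmπ : m ≤ Real.pi := min_le_right _ _
  have hpi := Real.pi_pos
  rcases le_or_gt (h 0).re 0 with hre | hre
  · obtain ⟨t, htIoo, hgood⟩ := existsGood b hb0 z₀ hz₀ 0 m hm0
      (fun x hx => ⟨by cases hx; linarith, by cases' hx with h1 h2; linarith⟩)
    rcases htIoo with ⟨ht1, ht2⟩
    have h1 : 0 < |t| := by rw [abs_of_pos ht1]; exact ht1
    have h2 : |t| < Real.pi := by rw [abs_of_pos ht1]; linarith
    obtain ⟨s, hts, hsgn⟩ := Hreal t h1 h2 hgood
    have hsinpos : 0 < Real.sin (t/2) :=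
      Real.sin_pos_of_pos_of_lt_pi (by linarith) (by linarith)
    have hspos : 0 ≤ s := by nlinarith
    have hdist := hδ (show dist t 0 < δ by
      rw [Real.dist_eq, sub_zero, abs_of_pos ht1]; linarith)
    rw [Complex.dist_eq, hts] at hdist
    have hcontra := auxContra (h 0) s (mul_nonpos_of_nonpos_of_nonneg hre hspos)
    linarith
  · obtain ⟨t, htIoo, hgood⟩ := existsGood b hb0 z₀ hz₀ (-m) 0 (by linarith)
      (fun x hx => ⟨by cases' hx with h1 h2; linarith, by cases' hx with h1 h2; linarith⟩)
    rcases htIoo with ⟨ht1, ht2⟩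
    have h1 : 0 < |t| := by rw [abs_of_neg ht2]; linarith
    have h2 : |t| < Real.pi := by rw [abs_of_neg ht2]; linarith
    obtain ⟨s, hts, hsgn⟩ := Hreal t h1 h2 hgood
    have hsinneg : Real.sin (t/2) < 0 :=
      Real.sin_neg_of_neg_of_neg_pi_lt (by linarith) (by linarith)
    have hsneg : s ≤ 0 := by nlinarith
    have hdist := hδ (show dist t 0 < δ by
      rw [Real.dist_eq, sub_zero, abs_of_neg ht2]; linarith)
    rw [Complex.dist_eq, hts] at hdist
    have hcontra := auxContra (h 0) s (mul_nonpos_of_nonneg_of_nonpos hre.le hsneg)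
    linarith

end RatOrdAux

open RatOrdAux Polynomial in
/-- For a nonzero rational function `μ` with `μ* = μ` (where `μ*(z) = conj(μ(1/conj z))`,
encoded pointwise): (1) the divisor of `μ` on `ℂ^×` is symmetric under `z ↦ 1/conj(z)`,
and `ord₀(μ) = ord_∞(μ)`; (2) if moreover `μ ≥ 0` on the unit circle, then all orders of `μ`
at points of the unit circle are even. -/
theorem ratOrd_symm_of_selfStar (μ : RatFunc ℂ) (hμ : μ ≠ 0)
    (hstar : ∀ z : ℂ, z ≠ 0 → μ.denom.eval z ≠ 0 →
      μ.denom.eval (((starRingEnd ℂ) z)⁻¹) ≠ 0 →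
      μ.eval (RingHom.id ℂ) z =
        (starRingEnd ℂ) (μ.eval (RingHom.id ℂ) (((starRingEnd ℂ) z)⁻¹))) :
    (∀ z₀ : ℂ, z₀ ≠ 0 → ratOrd μ z₀ = ratOrd μ (((starRingEnd ℂ) z₀)⁻¹)) ∧
    ratOrd μ 0 = ratOrdInf μ ∧
    ((∀ z : ℂ, ‖z‖ = 1 → μ.denom.eval z ≠ 0 →
        ∃ r : ℝ, 0 ≤ r ∧ μ.eval (RingHom.id ℂ) z = (r : ℂ)) →
      ∀ z₀ : ℂ, ‖z₀‖ = 1 → Even (ratOrd μ z₀)) := by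
  have key := starKey μ hμ hstar
  have horders := ordersOfKey μ.num μ.denom (RatFunc.num_ne_zero hμ) μ.denom_ne_zero key
  refine ⟨?_, ?_, ?_⟩
  · intro z₀ hz₀
    simp only [ratOrd]
    exact horders.1 z₀ hz₀
  · simp only [ratOrd, ratOrdInf]
    exact horders.2
  · intro hpos z₀ habs
    simp only [ratOrd]
    apply part3 μ.num μ.denom (RatFunc.num_ne_zero hμ) μ.denom_ne_zero ?_ z₀ habs
    intro z hz hbz
    obtain ⟨r, hr0, hrv⟩ := hpos z hz hbz
    refine ⟨r, hr0, ?_⟩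
    rw [← hrv]
    rfl
end
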